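/- The normalized maximal-randomness MABK value tends to 1 along even N: the sequence N ↦ M_N(θ*_N) / 2^{(N−1)/2}, restricted to even N ≥ 2, converges to 1 as N → ∞. Equivalently, the function k ↦ M_{2k+2}(θ*_{2k+2}) / 2^{(2k+1)/2} tends to 1 as k → ∞. (In the limit of large even N, one can achieve arbitrarily close to the maximum quantum violation 2^{(N−1)/2} of the N-party MABK inequality while certifying maximum device-independent randomness.) -/
import Mathlib


open Real Filter

/-- The MABK value `M_N(θ)` of the one-parameter symmetric GHZ strategy. -/
noncomputable def MABK (N : ℕ) (θ : ℝ) : ℝ :=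
  (2 : ℝ) ^ (((N : ℝ) - 1) / 2) *
    (cos (θ / 2 + π / 4) ^ N * sin ((N : ℝ) * θ / 2 + π / 4)
      + cos (θ / 2 - π / 4) ^ N * sin ((N : ℝ) * θ / 2 - π / 4))

/-- The value `t_N` defined, for even `N`, according to `N mod 8`. -/
noncomputable def tval (N : ℕ) : ℝ :=
  if N % 8 = 2 then (N : ℝ) / 4 + 1 / 2
  else if N % 8 = 4 then (N : ℝ) / 4
  else if N % 8 = 6 then 3 * (N : ℝ) / 4 + 1 / 2
  else 3 * (N : ℝ) / 4 + 1

/-- The angle `θ*_N = 2π t_N/(N+1)`. -/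
noncomputable def thetaStar (N : ℕ) : ℝ := 2 * π * tval N / ((N : ℝ) + 1)

lemma core0 (N m : ℕ) (hN : Even N) (θ ε : ℝ)
    (hA : θ/2 + π/4 = ε + π/2) (hB : θ/2 - π/4 = ε)
    (hC : (N:ℝ)*θ/2 + π/4 = (π - ε) + m*(2*π))
    (hD : (N:ℝ)*θ/2 - π/4 = (π/2 - ε) + m*(2*π)) :
    cos (θ/2+π/4)^N * sin ((N:ℝ)*θ/2+π/4) + cos (θ/2-π/4)^N * sin ((N:ℝ)*θ/2-π/4)
      = cos ε^(N+1) + 1 * sin ε^(N+1) := by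
  rw [hA, hB, hC, hD, sin_add_nat_mul_two_pi, sin_add_nat_mul_two_pi, sin_pi_sub,
    sin_pi_div_two_sub, cos_add_pi_div_two, hN.neg_pow, pow_succ, pow_succ]
  ring

lemma core1 (N m : ℕ) (θ ε : ℝ)
    (hA : θ/2 + π/4 = π/2 - ε) (hB : θ/2 - π/4 = -ε)
    (hC : (N:ℝ)*θ/2 + π/4 = (ε + π) + m*(2*π))
    (hD : (N:ℝ)*θ/2 - π/4 = (ε + π/2) + m*(2*π)) :
    cos (θ/2+π/4)^N * sin ((N:ℝ)*θ/2+π/4) + cos (θ/2-π/4)^N * sin ((N:ℝ)*θ/2-π/4)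
      = cos ε^(N+1) + (-1) * sin ε^(N+1) := by
  rw [hA, hB, hC, hD, sin_add_nat_mul_two_pi, sin_add_nat_mul_two_pi, sin_add_pi,
    sin_add_pi_div_two, cos_pi_div_two_sub, cos_neg, pow_succ, pow_succ]
  ring

lemma core2 (N m : ℕ) (hN : Even N) (θ ε : ℝ)
    (hA : θ/2 + π/4 = π - ε) (hB : θ/2 - π/4 = π/2 - ε)
    (hC : (N:ℝ)*θ/2 + π/4 = (ε + π/2) + m*(2*π))
    (hD : (N:ℝ)*θ/2 - π/4 = ε + m*(2*π)) :
    cos (θ/2+π/4)^N * sin ((N:ℝ)*θ/2+π/4) + cos (θ/2-π/4)^N * sin ((N:ℝ)*θ/2-π/4)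
      = cos ε^(N+1) + 1 * sin ε^(N+1) := by
  rw [hA, hB, hC, hD, sin_add_nat_mul_two_pi, sin_add_nat_mul_two_pi, cos_pi_sub,
    sin_add_pi_div_two, cos_pi_div_two_sub, hN.neg_pow, pow_succ, pow_succ]
  ring

lemma core3 (N m : ℕ) (hN : Even N) (θ ε : ℝ)
    (hA : θ/2 + π/4 = ε + π) (hB : θ/2 - π/4 = ε + π/2)
    (hC : (N:ℝ)*θ/2 + π/4 = (π/2 - ε) + m*(2*π))
    (hD : (N:ℝ)*θ/2 - π/4 = -ε + m*(2*π)) :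
    cos (θ/2+π/4)^N * sin ((N:ℝ)*θ/2+π/4) + cos (θ/2-π/4)^N * sin ((N:ℝ)*θ/2-π/4)
      = cos ε^(N+1) + (-1) * sin ε^(N+1) := by
  rw [hA, hB, hC, hD, sin_add_nat_mul_two_pi, sin_add_nat_mul_two_pi, sin_pi_div_two_sub,
    sin_neg, cos_add_pi, cos_add_pi_div_two, hN.neg_pow, hN.neg_pow, pow_succ, pow_succ]
  ring

lemma mabk_norm (k : ℕ) :
    MABK (2*k+2) (thetaStar (2*k+2)) / (2:ℝ) ^ ((2*(k:ℝ)+1)/2) =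
    cos (thetaStar (2*k+2)/2 + π/4) ^ (2*k+2)
        * sin (((2*k+2:ℕ):ℝ) * thetaStar (2*k+2)/2 + π/4)
      + cos (thetaStar (2*k+2)/2 - π/4) ^ (2*k+2)
        * sin (((2*k+2:ℕ):ℝ) * thetaStar (2*k+2)/2 - π/4) := by
  rw [MABK]
  have h : (((2*k+2:ℕ):ℝ) - 1)/2 = (2*(k:ℝ)+1)/2 := by push_cast; ring
  rw [h, mul_div_cancel_left₀ _ (ne_of_gt (rpow_pos_of_pos two_pos _))]

set_option maxHeartbeats 1000000 in
lemma mabk_closed (k : ℕ) : ∃ s : ℝ, |s| = 1 ∧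
    MABK (2*k+2) (thetaStar (2*k+2)) / (2:ℝ) ^ ((2*(k:ℝ)+1)/2)
      = cos (π/(4*(2*(k:ℝ)+3))) ^ (2*k+3) + s * sin (π/(4*(2*(k:ℝ)+3))) ^ (2*k+3) := by
  have hr : k % 4 = 0 ∨ k % 4 = 1 ∨ k % 4 = 2 ∨ k % 4 = 3 := by omega
  rcases hr with h|h|h|h
  · obtain ⟨m, rfl⟩ : ∃ m, k = 4*m := ⟨k/4, by omega⟩
    have h8 : (2*(4*m)+2) % 8 = 2 := by omega
    refine ⟨1, by norm_num, ?_⟩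
    rw [mabk_norm]
    have hh : 2*(4*m)+3 = (2*(4*m)+2)+1 := by omega
    rw [hh]
    refine core0 _ m ⟨4*m+1, by ring⟩ _ _ ?_ ?_ ?_ ?_ <;>
      · rw [thetaStar, tval, if_pos h8]; push_cast; field_simp; ring
  · obtain ⟨m, rfl⟩ : ∃ m, k = 4*m+1 := ⟨k/4, by omega⟩
    have h8 : (2*(4*m+1)+2) % 8 = 4 := by omega
    refine ⟨-1, by norm_num, ?_⟩
    rw [mabk_norm]
    have hh : 2*(4*m+1)+3 = (2*(4*m+1)+2)+1 := by omega
    rw [hh]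
    refine core1 _ m _ _ ?_ ?_ ?_ ?_ <;>
      · rw [thetaStar, tval, if_neg (by omega), if_pos h8]; push_cast; field_simp; ring
  · obtain ⟨m, rfl⟩ : ∃ m, k = 4*m+2 := ⟨k/4, by omega⟩
    have h8 : (2*(4*m+2)+2) % 8 = 6 := by omega
    refine ⟨1, by norm_num, ?_⟩
    rw [mabk_norm]
    have hh : 2*(4*m+2)+3 = (2*(4*m+2)+2)+1 := by omega
    rw [hh]
    refine core2 _ (3*m+2) ⟨4*m+3, by ring⟩ _ _ ?_ ?_ ?_ ?_ <;>
      · rw [thetaStar, tval, if_neg (by omega), if_neg (by omega), if_pos h8]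
        push_cast; field_simp; ring
  · obtain ⟨m, rfl⟩ : ∃ m, k = 4*m+3 := ⟨k/4, by omega⟩
    have h8 : (2*(4*m+3)+2) % 8 = 0 := by omega
    refine ⟨-1, by norm_num, ?_⟩
    rw [mabk_norm]
    have hh : 2*(4*m+3)+3 = (2*(4*m+3)+2)+1 := by omega
    rw [hh]
    refine core3 _ (3*m+3) ⟨4*m+4, by ring⟩ _ _ ?_ ?_ ?_ ?_ <;>
      · rw [thetaStar, tval, if_neg (by omega), if_neg (by omega), if_neg (by omega)]
        push_cast; field_simp; ring

/-- Proposition 6: in the limit of large even `N`, the MABK value `m*_N = M_N(θ*_N)`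
achievable with maximum device-independent randomness tends to the maximum quantum
violation `2^{(N−1)/2}`: the normalized sequence along even `N = 2k+2` converges to `1`. -/
theorem mabk_maxRandomness_asymptotic :
    Tendsto
      (fun k : ℕ =>
        MABK (2 * k + 2) (thetaStar (2 * k + 2)) / (2 : ℝ) ^ ((2 * (k : ℝ) + 1) / 2))
      atTop (nhds 1) := by
  have hb : ∀ k : ℕ,
      1 - (π^2/32 + π/4) * (2*(k:ℝ)+3)⁻¹ ≤
        MABK (2*k+2) (thetaStar (2*k+2)) / (2:ℝ) ^ ((2*(k:ℝ)+1)/2) ∧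
      MABK (2*k+2) (thetaStar (2*k+2)) / (2:ℝ) ^ ((2*(k:ℝ)+1)/2) ≤ 1 := by
    intro k
    obtain ⟨s, hs, hv⟩ := mabk_closed k
    set ε := π/(4*(2*(k:ℝ)+3)) with hεdef
    have hk3 : (0:ℝ) < 2*(k:ℝ)+3 := by positivity
    have hε0 : 0 < ε := by rw [hεdef]; positivity
    have hεsmall : ε ≤ 1 := by
      rw [hεdef, div_le_one (by positivity)]
      nlinarith [pi_le_four]
    have hs0 : 0 ≤ sin ε := sin_nonneg_of_nonneg_of_le_pi hε0.le
      (by linarith [pi_gt_three])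
    have hs1 : sin ε ≤ 1 := sin_le_one ε
    have hc0 : 0 ≤ cos ε := cos_nonneg_of_mem_Icc
      ⟨by linarith [pi_gt_three], by linarith [pi_gt_three]⟩
    have hc1 : cos ε ≤ 1 := cos_le_one ε
    have hspow0 : 0 ≤ sin ε ^ (2*k+3) := pow_nonneg hs0 _
    have hsinpow : sin ε ^ (2*k+3) ≤ ε :=
      le_trans (pow_le_of_le_one hs0 hs1 (by omega)) (Real.sin_le hε0.le)
    have hsabs : |s * sin ε ^(2*k+3)| ≤ sin ε^(2*k+3) := by
      rw [abs_mul, hs, one_mul, abs_of_nonneg hspow0]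
    have h1 := abs_le.1 hsabs
    constructor
    · have hber : 1 - (2*(k:ℝ)+3) * (ε^2/2) ≤ (1 - ε^2/2)^(2*k+3) := by
        have hB := one_add_mul_le_pow (a := -(ε^2/2)) (by nlinarith) (2*k+3)
        have he : (1 + -(ε^2/2)) = 1 - ε^2/2 := by ring
        rw [he] at hB
        push_cast at hB
        linarith
      have hcos : (1 - ε^2/2)^(2*k+3) ≤ cos ε^(2*k+3) :=
        pow_le_pow_left₀ (by nlinarith) (one_sub_sq_div_two_le_cos) _
      have hne : (2*(k:ℝ)+3) ≠ 0 := hk3.ne'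
      have hεval : (2*(k:ℝ)+3) * (ε^2/2) = π^2/32 * (2*(k:ℝ)+3)⁻¹ := by
        rw [hεdef]; field_simp; ring
      have hεval2 : ε = π/4 * (2*(k:ℝ)+3)⁻¹ := by
        rw [hεdef]; field_simp
      rw [hv]
      linarith [h1.1]
    · rw [hv]
      have hcp : cos ε^(2*k+3) ≤ cos ε^2 := pow_le_pow_of_le_one hc0 hc1 (by omega)
      have hsp : sin ε^(2*k+3) ≤ sin ε^2 := pow_le_pow_of_le_one hs0 hs1 (by omega)
      have hpyth := sin_sq_add_cos_sq ε
      linarith [h1.2]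
  have htop : Tendsto (fun k : ℕ => 2*(k:ℝ)+3) atTop atTop := by
    apply tendsto_atTop_add_const_right
    exact (tendsto_natCast_atTop_atTop (R := ℝ)).const_mul_atTop two_pos
  have hinv : Tendsto (fun k : ℕ => (2*(k:ℝ)+3)⁻¹) atTop (nhds 0) :=
    htop.inv_tendsto_atTop
  have hlow : Tendsto (fun k : ℕ => 1 - (π^2/32 + π/4) * (2*(k:ℝ)+3)⁻¹)
      atTop (nhds 1) := by
    have h2 := hinv.const_mul (π^2/32 + π/4)
    simpa using tendsto_const_nhds.sub h2
  exact tendsto_of_tendsto_of_tendsto_of_le_of_le hlow tendsto_const_nhds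
    (fun k => (hb k).1) (fun k => (hb k).2)
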